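/- arXiv:1609.00699 — 3 statements merged into one kernel-verified Lean document; each statement's English description precedes it below -/
import Mathlib

section
/- Let R_α be a minimal rotation of the d-dimensional torus T^d with rotation vector α, and let r, s be relatively prime positive integers. If η is a probability measure on T^d × T^d invariant and ergodic for R_α^r × R_α^s, then the stabilizer of η (the group of translations of T^d × T^d preserving η) equals the closed subgroup T_{r,s} = {(t_1, t_2) ∈ T^d × T^d : s·t_1 = r·t_2}. -/
/-!
The Fourier coefficients `∫ χ dη` of the characters `χ(x, y) = e(m·x + n·y)` of `𝕋^d × 𝕋^d`
determine `η`. Translating `η` by `g` multiplies the coefficient of `χ` by `χ(g)`. Invariance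
under `R_α^r × R_α^s` makes the coefficient equal to itself times `e((r m + s n)·α)`, which is
`≠ 1` unless `r m + s n = 0` by minimality, so the coefficient vanishes. Since `r, s` are coprime,
the only coefficients that can survive are those of `(m, n) = (s k, -r k)`; these characters are
invariant, so by ergodicity they are a.e. constant of modulus one and their coefficients do not
vanish. Hence `g` preserves `η` iff `χ(g) = e(k·(s g₁ - r g₂)) = 1` for all `k`, that is iff
`s g₁ = r g₂`.
-/

open MeasureTheory

theorem MeasureTheory.Measure.ext_of_forall_integral_eq_of_dense_span {X : Type*}
    [TopologicalSpace X] [CompactSpace X] [HasOuterApproxClosed X] [MeasurableSpace X]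
    [BorelSpace X] {μ ν : Measure X} [IsFiniteMeasure μ] [IsFiniteMeasure ν] {s : Set C(X, ℂ)}
    (hs : Dense (Submodule.span ℂ s : Set C(X, ℂ)))
    (h : ∀ f ∈ s, ∫ x, f x ∂μ = ∫ x, f x ∂ν) : μ = ν := by
  let integralCLM (μ : Measure X) [IsFiniteMeasure μ] : C(X, ℂ) →L[ℂ] ℂ :=
    (L1.integralCLM' ℂ).comp (ContinuousMap.toLp 1 μ ℂ)
  have integralCLM_apply (μ : Measure X) [IsFiniteMeasure μ] (f : C(X, ℂ)) :
      integralCLM μ f = ∫ x, f x ∂μ := by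
    rw [← integral_congr_ae (ContinuousMap.coeFn_toLp (p := 1) (𝕜 := ℂ) μ f),
      ← L1.integral_eq_integral, L1.integral_eq' ℂ]
    rfl
  have hμν : integralCLM μ = integralCLM ν :=
    ContinuousLinearMap.ext_on hs fun f hf => by simp only [integralCLM_apply, h f hf]
  refine ext_of_forall_integral_eq_of_IsFiniteMeasure fun f => ?_
  have := congr($hμν ⟨fun x => (f x : ℂ), by fun_prop⟩)
  simp only [integralCLM_apply, ContinuousMap.coe_mk] at this
  exact_mod_cast this

theorem Ergodic.norm_integral_eq_one_of_comp_eq {X E : Type*} [MeasurableSpace X]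
    [NormedAddCommGroup E] [NormedSpace ℝ E] [CompleteSpace E] {T : X → X} {μ : Measure X}
    [IsProbabilityMeasure μ] (hT : Ergodic T μ) {f : X → E} (hf : AEStronglyMeasurable f μ)
    (hfT : f ∘ T = f) (hnorm : ∀ x, ‖f x‖ = 1) : ‖∫ x, f x ∂μ‖ = 1 := by
  obtain ⟨c, hc⟩ := hT.ae_eq_const_of_ae_eq_comp_ae hf (.of_forall fun x => congrFun hfT x)
  obtain ⟨x, hx⟩ := hc.exists
  rw [integral_congr_ae hc]
  simp only [Function.const_apply, integral_const, probReal_univ, one_smul] at hx ⊢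
  rw [← hx, hnorm]

theorem MeasureTheory.MeasurePreserving.integral_eq_zero_of_comp_eq_smul {X E : Type*}
    [MeasurableSpace X] [NormedAddCommGroup E] [NormedSpace ℂ E] {T : X → X} {μ : Measure X}
    (hT : MeasurePreserving T μ μ) {f : X → E} (hf : AEStronglyMeasurable f μ) {c : ℂ}
    (hfT : ∀ x, f (T x) = c • f x) (hc : c ≠ 1) : ∫ x, f x ∂μ = 0 := by
  have hinv : ∫ x, f x ∂μ = c • ∫ x, f x ∂μ := by
    conv_lhs => rw [← hT.map_eq]
    rw [integral_map hT.aemeasurable (by rwa [hT.map_eq]), ← integral_smul]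
    simp only [hfT]
  have : (1 - c) • ∫ x, f x ∂μ = 0 := by rw [sub_smul, one_smul, ← hinv, sub_self]
  exact (smul_eq_zero.1 this).resolve_left (sub_ne_zero.2 hc.symm)

theorem IsCoprime.exists_eq_smul_of_smul_add_smul_eq_zero {ι : Type*} {r s : ℤ}
    (hrs : IsCoprime r s) {a b : ι → ℤ} (h : r • a + s • b = 0) :
    ∃ m : ι → ℤ, a = s • m ∧ b = -(r • m) := by
  obtain ⟨u, v, huv⟩ := hrs
  refine ⟨v • a - u • b, funext fun i => ?_, funext fun i => ?_⟩ <;>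
    have hi := congrFun h i <;>
    simp only [Pi.add_apply, Pi.smul_apply, Pi.sub_apply, Pi.neg_apply, smul_eq_mul,
      Pi.zero_apply] at hi ⊢
  · linear_combination u * hi - a i * huv
  · linear_combination v * hi - b i * huv

namespace UnitAddTorus

variable {ι κ : Type*} [Fintype ι] [Fintype κ]

theorem mFourier_apply_add (n : ι → ℤ) (x y : UnitAddTorus ι) :
    mFourier n (x + y) = mFourier n x * mFourier n y := by
  simp only [mFourier, ContinuousMap.coe_mk, ← Finset.prod_mul_distrib, Pi.add_apply,
    fourier_apply, smul_add, AddCircle.toCircle_add, Circle.coe_mul]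

theorem mFourier_apply_zsmul (n : ι → ℤ) (k : ℤ) (x : UnitAddTorus ι) :
    mFourier n (k • x) = mFourier (k • n) x := by
  simp only [mFourier, ContinuousMap.coe_mk, Pi.smul_apply, fourier_apply, smul_smul,
    smul_eq_mul, mul_comm]

theorem mFourier_apply_zero (n : ι → ℤ) : mFourier n (0 : UnitAddTorus ι) = 1 := by
  simp [mFourier]

theorem norm_mFourier_apply (n : ι → ℤ) (x : UnitAddTorus ι) : ‖mFourier n x‖ = 1 := by
  simp [mFourier, fourier_apply, Circle.norm_coe]

theorem mFourier_injective : Function.Injective (mFourier (d := ι)) := fun m n h =>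
  (orthonormal_mFourier (d := ι)).linearIndependent.injective (by simp only [mFourierLp, h])

theorem eq_zero_of_forall_mFourier_eq_one {x : UnitAddTorus ι}
    (h : ∀ n, mFourier n x = 1) : x = 0 := by
  classical
  funext i
  have hi := h (Pi.single i 1)
  rw [mFourier_single, fourier_one, ← fourier_zero' (T := 1)] at hi
  exact AddCircle.injective_toCircle one_ne_zero (Subtype.ext hi)

theorem eq_zero_of_mFourier_eq_one_of_dense {α : UnitAddTorus ι}
    (hα : Dense (Set.range fun k : ℤ => k • α)) {n : ι → ℤ} (h : mFourier n α = 1) : n = 0 := by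
  have horbit : ∀ k : ℤ, mFourier n (k • α) = 1 := fun k => by
    induction k using Int.induction_on with
    | zero => rw [zero_smul, mFourier_apply_zero]
    | succ k ih => rw [add_smul, one_smul, mFourier_apply_add, ih, h, one_mul]
    | pred k ih =>
      have hstep := mFourier_apply_add n ((-(k : ℤ) - 1) • α) α
      rw [sub_smul, one_smul, sub_add_cancel, ih, h, mul_one] at hstep
      rw [sub_smul, one_smul, ← hstep]
  have hclosed : IsClosed {x | mFourier n x = 1} := isClosed_eq (by fun_prop) continuous_const
  have hall : ∀ x, mFourier n x = 1 := fun x =>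
    closure_minimal (by rintro _ ⟨k, rfl⟩; exact horbit k) hclosed (hα x)
  exact mFourier_injective (ContinuousMap.ext fun x => by rw [hall, mFourier_zero]; rfl)

theorem measure_ext_of_integral_mFourier {μ ν : Measure (UnitAddTorus ι)} [IsFiniteMeasure μ]
    [IsFiniteMeasure ν] (h : ∀ n, ∫ x, mFourier n x ∂μ = ∫ x, mFourier n x ∂ν) : μ = ν :=
  Measure.ext_of_forall_integral_eq_of_dense_span
    (Submodule.dense_iff_topologicalClosure_eq_top.2 span_mFourier_closure_eq_top)
    (by rintro _ ⟨n, rfl⟩; exact h n)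

noncomputable def mFourierProd (m : ι → ℤ) (n : κ → ℤ) : C(UnitAddTorus ι × UnitAddTorus κ, ℂ) :=
  (mFourier m).comp .fst * (mFourier n).comp .snd

@[simp]
theorem mFourierProd_apply (m : ι → ℤ) (n : κ → ℤ) (z : UnitAddTorus ι × UnitAddTorus κ) :
    mFourierProd m n z = mFourier m z.1 * mFourier n z.2 :=
  rfl

theorem measure_ext_of_integral_mFourierProd {μ ν : Measure (UnitAddTorus ι × UnitAddTorus κ)}
    [IsFiniteMeasure μ] [IsFiniteMeasure ν]
    (h : ∀ m n, ∫ z, mFourierProd m n z ∂μ = ∫ z, mFourierProd m n z ∂ν) : μ = ν := by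
  let e := (MeasurableEquiv.sumPiEquivProdPi fun _ : ι ⊕ κ => UnitAddCircle).symm
  have he : ∀ (n : ι ⊕ κ → ℤ) z, mFourier n (e z) = mFourierProd (n ∘ .inl) (n ∘ .inr) z :=
    fun n z => Fintype.prod_sum_type _
  refine e.measurableEmbedding.map_injective (measure_ext_of_integral_mFourier fun n => ?_)
  simp only [integral_map_equiv, he, h]

theorem mFourierProd_apply_add (m : ι → ℤ) (n : κ → ℤ) (z w : UnitAddTorus ι × UnitAddTorus κ) :
    mFourierProd m n (z + w) = mFourierProd m n z * mFourierProd m n w := by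
  simp only [mFourierProd_apply, Prod.fst_add, Prod.snd_add, mFourier_apply_add]
  ring

theorem norm_mFourierProd_apply (m : ι → ℤ) (n : κ → ℤ) (z : UnitAddTorus ι × UnitAddTorus κ) :
    ‖mFourierProd m n z‖ = 1 := by
  rw [mFourierProd_apply, norm_mul, norm_mFourier_apply, norm_mFourier_apply, mul_one]

theorem integral_mFourierProd_map_add_right (μ : Measure (UnitAddTorus ι × UnitAddTorus κ))
    (m : ι → ℤ) (n : κ → ℤ) (g : UnitAddTorus ι × UnitAddTorus κ) :
    ∫ z, mFourierProd m n z ∂μ.map (· + g) = mFourierProd m n g * ∫ z, mFourierProd m n z ∂μ := by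
  rw [integral_map (by fun_prop) (by fun_prop), ← integral_const_mul]
  simp only [mFourierProd_apply_add, mul_comm]

theorem mFourierProd_zsmul_neg_zsmul (m : ι → ℤ) (a b : ℤ) (z : UnitAddTorus ι × UnitAddTorus ι) :
    mFourierProd (a • m) (-(b • m)) z = mFourier m (a • z.1 - b • z.2) := by
  rw [mFourierProd_apply, ← neg_smul, ← mFourier_apply_zsmul, ← mFourier_apply_zsmul,
    neg_smul, ← mFourier_apply_add, sub_eq_add_neg]

variable {α : UnitAddTorus ι} {r s : ℕ} {η : Measure (UnitAddTorus ι × UnitAddTorus ι)}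

theorem mFourierProd_apply_add_smul (m n : ι → ℤ) (z : UnitAddTorus ι × UnitAddTorus ι) :
    mFourierProd m n (z.1 + r • α, z.2 + s • α) =
      mFourier ((r : ℤ) • m + (s : ℤ) • n) α * mFourierProd m n z := by
  simp only [mFourierProd_apply, mFourier_apply_add, mFourier_add, ← natCast_zsmul,
    mFourier_apply_zsmul]
  ring

theorem mFourier_smul_sub_smul_eq_one [IsProbabilityMeasure η]
    (herg : Ergodic (fun z : UnitAddTorus ι × UnitAddTorus ι => (z.1 + r • α, z.2 + s • α)) η)
    {g : UnitAddTorus ι × UnitAddTorus ι} (hg : η.map (· + g) = η) (m : ι → ℤ) :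
    mFourier m (s • g.1 - r • g.2) = 1 := by
  set χ := mFourierProd ((s : ℤ) • m) (-((r : ℤ) • m))
  have hχ : χ ∘ (fun z => (z.1 + r • α, z.2 + s • α)) = χ := funext fun z => by
    rw [Function.comp_apply, mFourierProd_apply_add_smul, smul_neg, smul_smul, smul_smul,
      mul_comm (s : ℤ), add_neg_cancel, mFourier_zero, ContinuousMap.one_apply, one_mul]
  have hI : ∫ z, χ z ∂η ≠ 0 := norm_ne_zero_iff.1 <| by
    rw [herg.norm_integral_eq_one_of_comp_eq (by fun_prop) hχ (norm_mFourierProd_apply _ _)]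
    exact one_ne_zero
  have hmap := integral_mFourierProd_map_add_right η ((s : ℤ) • m) (-((r : ℤ) • m)) g
  rw [hg, mFourierProd_zsmul_neg_zsmul] at hmap
  simpa only [natCast_zsmul] using (mul_eq_right₀ hI).1 hmap.symm

theorem map_add_right_eq_of_smul_eq_smul [IsFiniteMeasure η]
    (hα : Dense (Set.range fun k : ℤ => k • α)) (hrs : r.Coprime s)
    (hT : MeasurePreserving (fun z : UnitAddTorus ι × UnitAddTorus ι => (z.1 + r • α, z.2 + s • α))
      η η)
    {g : UnitAddTorus ι × UnitAddTorus ι} (hg : s • g.1 = r • g.2) : η.map (· + g) = η := by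
  refine measure_ext_of_integral_mFourierProd fun m n => ?_
  rw [integral_mFourierProd_map_add_right]
  by_cases hmn : (r : ℤ) • m + (s : ℤ) • n = 0
  · obtain ⟨k, rfl, rfl⟩ :=
      (Nat.isCoprime_iff_coprime.2 hrs).exists_eq_smul_of_smul_add_smul_eq_zero hmn
    rw [mFourierProd_zsmul_neg_zsmul, natCast_zsmul, natCast_zsmul, hg, sub_self,
      mFourier_apply_zero, one_mul]
  · rw [hT.integral_eq_zero_of_comp_eq_smul (by fun_prop) (mFourierProd_apply_add_smul m n)
      (mt (eq_zero_of_mFourier_eq_one_of_dense hα) hmn), mul_zero]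

end UnitAddTorus

open UnitAddTorus in
theorem stabilizer_of_ergodic_joining_of_powers_general {d : ℕ}
    (α : Fin d → AddCircle (1 : ℝ))
    (hmin : ∀ x : Fin d → AddCircle (1 : ℝ),
      Dense (Set.range fun n : ℤ => x + n • α))
    (r s : ℕ) (hrs : Nat.Coprime r s)
    (η : Measure ((Fin d → AddCircle (1 : ℝ)) × (Fin d → AddCircle (1 : ℝ))))
    [IsProbabilityMeasure η]
    (herg : Ergodic (fun z : (Fin d → AddCircle (1 : ℝ)) × (Fin d → AddCircle (1 : ℝ)) =>
      (z.1 + r • α, z.2 + s • α)) η) :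
    {g : (Fin d → AddCircle (1 : ℝ)) × (Fin d → AddCircle (1 : ℝ)) |
        Measure.map (fun z => z + g) η = η} =
      {g : (Fin d → AddCircle (1 : ℝ)) × (Fin d → AddCircle (1 : ℝ)) |
        s • g.1 = r • g.2} := by
  ext g
  constructor
  · intro hg
    exact sub_eq_zero.1 (eq_zero_of_forall_mFourier_eq_one (mFourier_smul_sub_smul_eq_one herg hg))
  · exact map_add_right_eq_of_smul_eq_smul (by simpa using hmin 0) hrs herg.toMeasurePreserving

/-- If `R_α` is a minimal rotation of the torus `T^d` and `r, s` are relatively prime, then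
the stabilizer of any `R_α^r × R_α^s`-invariant ergodic probability measure `η` on
`T^d × T^d` is the subgroup `{(t₁, t₂) : s•t₁ = r•t₂}`. -/
theorem stabilizer_of_ergodic_joining_of_powers {d : ℕ} (hd : 0 < d)
    (α : Fin d → AddCircle (1 : ℝ))
    (hmin : ∀ x : Fin d → AddCircle (1 : ℝ),
      Dense (Set.range fun n : ℤ => x + n • α))
    (r s : ℕ) (hr : 0 < r) (hs : 0 < s) (hrs : Nat.Coprime r s)
    (η : Measure ((Fin d → AddCircle (1 : ℝ)) × (Fin d → AddCircle (1 : ℝ))))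
    [IsProbabilityMeasure η]
    (herg : Ergodic (fun z : (Fin d → AddCircle (1 : ℝ)) × (Fin d → AddCircle (1 : ℝ)) =>
      (z.1 + r • α, z.2 + s • α)) η) :
    {g : (Fin d → AddCircle (1 : ℝ)) × (Fin d → AddCircle (1 : ℝ)) |
        Measure.map (fun z => z + g) η = η} =
      {g : (Fin d → AddCircle (1 : ℝ)) × (Fin d → AddCircle (1 : ℝ)) |
        s • g.1 = r • g.2} :=
  stabilizer_of_ergodic_joining_of_powers_general α hmin r s hrs η herg
end

section
/- Let G be an abelian lcsc group with no nontrivial torsion and H ≤ G a closed cocompact subgroup without nontrivial compact subgroups. Let p, q be coprime integers with ap + bq = 1, let s : G/H → G be a Borel selector with relatively compact image, θ(g, xH) = s(gxH)^{-1} g s(xH) ∈ H, and fix c ∈ G. For the cocycle θ^{(p,q)}(g, yH) = (θ(g^p, y^p H), θ(g^q, y^q c H)) with values in H × H, the composition with the automorphism J(h_1, h_2) = (h_1^q h_2^{-p}, h_1^a h_2^b) of H × H has first coordinate Ψ_1 taking values in a relatively compact subset of H, namely in (A^{-1}A)^{q-p} where A = s(G/H). -/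
/-!
Since `G` is abelian, `θ(g, x) = s(gx)⁻¹ s(x) · g`, so in `θ(g^p, ·)^q θ(g^q, ·)^{-p}` the powers
of `g` contribute `g^{pq - qp} = 1` and what is left is `u^q v^{-p}` with `u, v ∈ A⁻¹A`.
These values lie in the image of the compact set `Ā⁻¹Ā × Ā⁻¹Ā` under the continuous map
`(u, v) ↦ u^q v^{-p}`, so their closure is compact.
-/

open Pointwise

section Cocycle

variable {G : Type*} [Group G] {H : Subgroup G} [H.Normal]

def selectorCocycle (s : G ⧸ H → G) (g : G) (x : G ⧸ H) : G :=
  (s ((g : G ⧸ H) * x))⁻¹ * g * s x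

theorem selectorCocycle_mem {s : G ⧸ H → G} (hs : ∀ y : G ⧸ H, ((s y : G) : G ⧸ H) = y)
    (g : G) (x : G ⧸ H) : selectorCocycle s g x ∈ H := by
  rw [← QuotientGroup.eq_one_iff, selectorCocycle, QuotientGroup.mk_mul, QuotientGroup.mk_mul,
    QuotientGroup.mk_inv, hs, hs]
  group

end Cocycle

theorem selectorCocycle_eq_mul {G : Type*} [CommGroup G] {H : Subgroup G} (s : G ⧸ H → G)
    (g : G) (x : G ⧸ H) : selectorCocycle s g x = (s ((g : G ⧸ H) * x))⁻¹ * s x * g :=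
  mul_right_comm _ _ _

theorem zpow_zpow_mul_zpow_zpow_neg {G : Type*} [CommGroup G] (g : G) (p q : ℤ) :
    (g ^ p) ^ q * (g ^ q) ^ (-p) = 1 := by
  rw [← zpow_mul, ← zpow_mul, ← zpow_add, show p * q + q * -p = 0 by ring, zpow_zero]

theorem selectorCocycle_zpow_mul_zpow_neg {G : Type*} [CommGroup G] {H : Subgroup G}
    (s : G ⧸ H → G) (p q : ℤ) (g : G) (x x' : G ⧸ H) :
    selectorCocycle s (g ^ p) x ^ q * selectorCocycle s (g ^ q) x' ^ (-p) =
      ((s (((g ^ p : G) : G ⧸ H) * x))⁻¹ * s x) ^ q *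
        ((s (((g ^ q : G) : G ⧸ H) * x'))⁻¹ * s x') ^ (-p) := by
  rw [selectorCocycle_eq_mul, selectorCocycle_eq_mul, mul_zpow _ (g ^ p), mul_zpow _ (g ^ q),
    mul_mul_mul_comm,
    zpow_zpow_mul_zpow_zpow_neg, mul_one]

theorem isCompact_closure_zpow_mul_zpow {G : Type*} [CommGroup G] [TopologicalSpace G]
    [IsTopologicalGroup G] {S K : Set G} (hK : IsCompact K) (hSK : S ⊆ K) (m n : ℤ) :
    IsCompact (closure {z : G | ∃ u ∈ S, ∃ v ∈ S, z = u ^ m * v ^ n}) := by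
  have hcont : Continuous fun w : G × G => w.1 ^ m * w.2 ^ n :=
    (continuous_fst.zpow m).mul (continuous_snd.zpow n)
  refine ((hK.prod hK).image hcont).closure_of_subset ?_
  rintro _ ⟨u, hu, v, hv, rfl⟩
  exact ⟨(u, v), ⟨hSK hu, hSK hv⟩, rfl⟩

theorem inv_mul_subset_closure_inv_mul_closure {G : Type*} [Group G] [TopologicalSpace G]
    (A : Set G) : A⁻¹ * A ⊆ (closure A)⁻¹ * closure A :=
  Set.mul_subset_mul (Set.inv_subset_inv.mpr subset_closure) subset_closure

theorem psi_one_relatively_compact_general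
    {G : Type*} [CommGroup G] [TopologicalSpace G] [IsTopologicalGroup G]
    (H : Subgroup G)
    (p q : ℤ)
    (A : Set G) (hA : IsCompact (closure A))
    (s : G ⧸ H → G) (hsA : ∀ y, s y ∈ A)
    (hs : ∀ y : G ⧸ H, (QuotientGroup.mk (s y) : G ⧸ H) = y)
    (c : G) :
    (∀ (g : G) (y : G ⧸ H),
      ((s ((QuotientGroup.mk (g ^ p) : G ⧸ H) * y ^ p))⁻¹ * g ^ p * s (y ^ p)) ^ q *
          ((s ((QuotientGroup.mk (g ^ q) : G ⧸ H) *
                (y ^ q * QuotientGroup.mk c)))⁻¹ * g ^ q *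
              s (y ^ q * QuotientGroup.mk c)) ^ (-p) ∈ H ∧
      ∃ u v : G, u ∈ A⁻¹ * A ∧ v ∈ A⁻¹ * A ∧
        ((s ((QuotientGroup.mk (g ^ p) : G ⧸ H) * y ^ p))⁻¹ * g ^ p * s (y ^ p)) ^ q *
            ((s ((QuotientGroup.mk (g ^ q) : G ⧸ H) *
                  (y ^ q * QuotientGroup.mk c)))⁻¹ * g ^ q *
                s (y ^ q * QuotientGroup.mk c)) ^ (-p) = u ^ q * v ^ (-p)) ∧
    IsCompact (closure {z : G | ∃ u ∈ A⁻¹ * A, ∃ v ∈ A⁻¹ * A, z = u ^ q * v ^ (-p)}) := by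
  have hsAA : ∀ x x', (s x)⁻¹ * s x' ∈ A⁻¹ * A := fun x x' =>
    Set.mul_mem_mul (Set.inv_mem_inv.mpr (hsA x)) (hsA x')
  refine ⟨fun g y => ⟨?_, _, _, hsAA _ _, hsAA _ _, selectorCocycle_zpow_mul_zpow_neg s p q g _ _⟩,
    ?_⟩
  · exact H.mul_mem (H.zpow_mem (selectorCocycle_mem hs _ _) q)
      (H.zpow_mem (selectorCocycle_mem hs _ _) (-p))
  · exact isCompact_closure_zpow_mul_zpow (hA.inv.mul hA)
      (inv_mul_subset_closure_inv_mul_closure A) q (-p)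

/-- The first coordinate `Ψ₁` of `J ∘ θ^{(p,q)}`, where `θ(g, xH) = s(gxH)⁻¹ g s(xH)` and
`J(h₁,h₂) = (h₁^q h₂^{-p}, h₁^a h₂^b)`, lies in `H` and takes values in the relatively
compact set `(A⁻¹A)^q (A⁻¹A)^{-p}` where `A = s(G/H)`. -/
theorem psi_one_relatively_compact
    {G : Type*} [CommGroup G] [TopologicalSpace G] [IsTopologicalGroup G]
    [LocallyCompactSpace G] [SecondCountableTopology G]
    (htor : ∀ g : G, ∀ n : ℕ, 0 < n → g ^ n = 1 → g = 1)
    (H : Subgroup G) (hcl : IsClosed (H : Set G)) [CompactSpace (G ⧸ H)]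
    (hnc : ∀ K : Subgroup G, K ≤ H → IsCompact (K : Set G) → K = ⊥)
    (p q a b : ℤ) (hpq : IsCoprime p q) (hab : a * p + b * q = 1)
    (A : Set G) (hA : IsCompact (closure A))
    (s : G ⧸ H → G) (hsA : ∀ y, s y ∈ A)
    (hs : ∀ y : G ⧸ H, (QuotientGroup.mk (s y) : G ⧸ H) = y)
    (hse : s 1 = 1) (c : G) :
    (∀ (g : G) (y : G ⧸ H),
      ((s ((QuotientGroup.mk (g ^ p) : G ⧸ H) * y ^ p))⁻¹ * g ^ p * s (y ^ p)) ^ q *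
          ((s ((QuotientGroup.mk (g ^ q) : G ⧸ H) *
                (y ^ q * QuotientGroup.mk c)))⁻¹ * g ^ q *
              s (y ^ q * QuotientGroup.mk c)) ^ (-p) ∈ H ∧
      ∃ u v : G, u ∈ A⁻¹ * A ∧ v ∈ A⁻¹ * A ∧
        ((s ((QuotientGroup.mk (g ^ p) : G ⧸ H) * y ^ p))⁻¹ * g ^ p * s (y ^ p)) ^ q *
            ((s ((QuotientGroup.mk (g ^ q) : G ⧸ H) *
                  (y ^ q * QuotientGroup.mk c)))⁻¹ * g ^ q *
                s (y ^ q * QuotientGroup.mk c)) ^ (-p) = u ^ q * v ^ (-p)) ∧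
    IsCompact (closure {z : G | ∃ u ∈ A⁻¹ * A, ∃ v ∈ A⁻¹ * A, z = u ^ q * v ^ (-p)}) :=
  psi_one_relatively_compact_general H p q A hA s hsA hs c
end

section
/- Let G be a connected simply connected nilpotent Lie group of nilpotency class k with lattice Γ, and let r, s be relatively prime positive integers. Suppose h ⊆ g ⊕ g is a Lie subalgebra containing, for each i = 1,...,d₁, an element (r X'_i, s X''_i) with X'_i ≡ X''_i ≡ X_i mod g^(2), where X_1 + g^(2), ..., X_{d₁} + g^(2) is a basis of g/g^(2). Then h contains {(r^k Z, s^k Z) : Z ∈ g^(k)}. -/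
/-! Write `C m` for `LieModule.lowerCentralSeries ℝ L L m`, the paper's `g^(m+1)`.
Call `Z` liftable at level `m` if it lies in `h.scaledDiagonalMod (r^(m+1)) (s^(m+1)) (C (m+1))`,
i.e. `h` contains some `(r^(m+1) Z', s^(m+1) Z'')` with `Z' ≡ Z'' ≡ Z mod C (m+1)`. Liftable elements form a subspace containing `C (m+1)`, so at level
`0` the `X i`, which span `L` modulo `C 1`, make everything liftable. Brackets of elements of the
lower central series only depend on them modulo the next term, so bracketing a level-`0` lift of
`x` with a level-`m` lift of `n ∈ C m` inside `h` lifts `⁅x, n⁆` at level `m+1`; such brackets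
span `C (m+1)`. At level `k-1` the congruence is modulo `C k = 0`, so the lift of `Z` is
`(r^k Z, s^k Z)` itself. -/

/-- The product of two Lie rings, with componentwise bracket. -/
instance prodLieRing {L M : Type*} [LieRing L] [LieRing M] : LieRing (L × M) where
  bracket x y := (⁅x.1, y.1⁆, ⁅x.2, y.2⁆)
  add_lie x y z := by
    refine Prod.ext ?_ ?_ <;> simp [add_lie]
  lie_add x y z := by
    refine Prod.ext ?_ ?_ <;> simp [lie_add]
  lie_self x := by
    refine Prod.ext ?_ ?_ <;> simp
  leibniz_lie x y z := by
    refine Prod.ext ?_ ?_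
    · exact leibniz_lie x.1 y.1 z.1
    · exact leibniz_lie x.2 y.2 z.2

/-- The product of two Lie algebras. -/
instance prodLieAlgebra {R L M : Type*} [CommRing R] [LieRing L] [LieRing M]
    [LieAlgebra R L] [LieAlgebra R M] : LieAlgebra R (L × M) where
  lie_smul t x y := by
    refine Prod.ext ?_ ?_
    · exact lie_smul t x.1 y.1
    · exact lie_smul t x.2 y.2

open LieModule

section LowerCentralSeries

variable {R L : Type*} [CommRing R] [LieRing L] [LieAlgebra R L]

lemma lie_mem_lowerCentralSeries_succ (x : L) {y : L} {j : ℕ}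
    (hy : y ∈ lowerCentralSeries R L L j) : ⁅x, y⁆ ∈ lowerCentralSeries R L L (j + 1) := by
  rw [lowerCentralSeries_succ]
  exact LieSubmodule.lie_mem_lie (LieSubmodule.mem_top x) hy

lemma lie_mem_lowerCentralSeries_add {x y : L} {i j : ℕ}
    (hx : x ∈ lowerCentralSeries R L L i) (hy : y ∈ lowerCentralSeries R L L j) :
    ⁅x, y⁆ ∈ lowerCentralSeries R L L (i + j + 1) := by
  induction i generalizing x y j with
  | zero => simpa using lie_mem_lowerCentralSeries_succ x hy
  | succ i ih =>
    rw [lowerCentralSeries_succ, ← LieSubmodule.mem_toSubmodule,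
      LieSubmodule.lieIdeal_oper_eq_linear_span'] at hx
    induction hx using Submodule.span_induction with
    | mem _ hz =>
      obtain ⟨a, -, n, hn, rfl⟩ := hz
      rw [lie_lie]
      refine sub_mem ?_ ?_
      · simpa [Nat.add_right_comm] using lie_mem_lowerCentralSeries_succ a (ih hn hy)
      · simpa [Nat.add_right_comm, Nat.add_assoc] using
          ih hn (lie_mem_lowerCentralSeries_succ a hy)
    | zero => simp
    | add _ _ _ _ hz₁ hz₂ => rw [add_lie]; exact add_mem hz₁ hz₂
    | smul t _ _ hz => rw [smul_lie]; exact Submodule.smul_mem _ t hz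

lemma lie_sub_lie_mem_lowerCentralSeries {x x' y y' : L} {i j : ℕ}
    (hx : x ∈ lowerCentralSeries R L L i) (hy : y ∈ lowerCentralSeries R L L j)
    (hx' : x' - x ∈ lowerCentralSeries R L L (i + 1))
    (hy' : y' - y ∈ lowerCentralSeries R L L (j + 1)) :
    ⁅x', y'⁆ - ⁅x, y⁆ ∈ lowerCentralSeries R L L (i + j + 2) := by
  have hy'j : y' ∈ lowerCentralSeries R L L j := by
    simpa using add_mem hy (antitone_lowerCentralSeries R L L j.le_succ hy')
  have h : ⁅x', y'⁆ - ⁅x, y⁆ = ⁅x' - x, y'⁆ + ⁅x, y' - y⁆ := by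
    rw [sub_lie, lie_sub]; abel
  rw [h]
  refine add_mem ?_ ?_
  · simpa [Nat.add_right_comm] using lie_mem_lowerCentralSeries_add hx' hy'j
  · simpa [Nat.add_assoc] using lie_mem_lowerCentralSeries_add hx hy'

end LowerCentralSeries

lemma Prod.lie_mk {L M : Type*} [LieRing L] [LieRing M] (x₁ y₁ : L) (x₂ y₂ : M) :
    ⁅((x₁, x₂) : L × M), (y₁, y₂)⁆ = (⁅x₁, y₁⁆, ⁅x₂, y₂⁆) :=
  rfl

namespace LieSubalgebra

variable {R L : Type*} [CommRing R] [LieRing L] [LieAlgebra R L]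

def scaledDiagonalMod (h : LieSubalgebra R (L × L)) (a b : R) (N : Submodule R L) :
    Submodule R L where
  carrier := {Z | ∃ Z' Z'', Z' - Z ∈ N ∧ Z'' - Z ∈ N ∧ (a • Z', b • Z'') ∈ h}
  zero_mem' := ⟨0, 0, by simp, by simp,
    by simpa only [smul_zero, Prod.mk_zero_zero] using h.zero_mem⟩
  add_mem' := by
    rintro Y Z ⟨Y', Y'', hY', hY'', hYh⟩ ⟨Z', Z'', hZ', hZ'', hZh⟩
    refine ⟨Y' + Z', Y'' + Z'', ?_, ?_, ?_⟩
    · simpa [add_sub_add_comm] using add_mem hY' hZ'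
    · simpa [add_sub_add_comm] using add_mem hY'' hZ''
    · simpa [smul_add] using h.add_mem hYh hZh
  smul_mem' := by
    rintro t Z ⟨Z', Z'', hZ', hZ'', hZh⟩
    refine ⟨t • Z', t • Z'', ?_, ?_, ?_⟩
    · simpa [smul_sub] using N.smul_mem t hZ'
    · simpa [smul_sub] using N.smul_mem t hZ''
    · simpa [smul_comm t] using h.smul_mem t hZh

variable {h : LieSubalgebra R (L × L)} {a b : R} {N : Submodule R L}

lemma mem_scaledDiagonalMod {Z : L} :
    Z ∈ h.scaledDiagonalMod a b N ↔
      ∃ Z' Z'', Z' - Z ∈ N ∧ Z'' - Z ∈ N ∧ (a • Z', b • Z'') ∈ h :=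
  Iff.rfl

lemma mem_scaledDiagonalMod_bot {Z : L} :
    Z ∈ h.scaledDiagonalMod a b ⊥ ↔ (a • Z, b • Z) ∈ h := by
  simp [mem_scaledDiagonalMod, sub_eq_zero]

lemma le_scaledDiagonalMod : N ≤ h.scaledDiagonalMod a b N :=
  fun Z hZ ↦ ⟨0, 0, by simpa using hZ, by simpa using hZ,
    by simpa only [smul_zero, Prod.mk_zero_zero] using h.zero_mem⟩

lemma scaledDiagonalMod_eq_top {ι : Type*} {X : ι → L}
    (hspan : Submodule.span R (Set.range fun i ↦ N.mkQ (X i)) = ⊤)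
    (hX : ∀ i, X i ∈ h.scaledDiagonalMod a b N) :
    h.scaledDiagonalMod a b N = ⊤ := by
  have hsup : N ⊔ Submodule.span R (Set.range X) = ⊤ := by
    rw [← Submodule.comap_map_mkQ, Submodule.map_span, ← Set.range_comp]
    exact (congrArg _ hspan).trans (Submodule.comap_top _)
  exact top_le_iff.mp <| hsup ▸ sup_le le_scaledDiagonalMod
    (Submodule.span_le.mpr <| Set.range_subset_iff.mpr hX)

lemma lie_mem_scaledDiagonalMod {a' b' : R} {x y : L} {i j : ℕ}
    (hx : x ∈ lowerCentralSeries R L L i)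
    (hxh : x ∈ h.scaledDiagonalMod a b (lowerCentralSeries R L L (i + 1)).toSubmodule)
    (hy : y ∈ lowerCentralSeries R L L j)
    (hyh : y ∈ h.scaledDiagonalMod a' b' (lowerCentralSeries R L L (j + 1)).toSubmodule) :
    ⁅x, y⁆ ∈ h.scaledDiagonalMod (a * a') (b * b')
      (lowerCentralSeries R L L (i + j + 2)).toSubmodule := by
  obtain ⟨x', x'', hx', hx'', hxh⟩ := hxh
  obtain ⟨y', y'', hy', hy'', hyh⟩ := hyh
  refine ⟨⁅x', y'⁆, ⁅x'', y''⁆, lie_sub_lie_mem_lowerCentralSeries hx hy hx' hy',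
    lie_sub_lie_mem_lowerCentralSeries hx hy hx'' hy'', ?_⟩
  simpa only [Prod.lie_mk, smul_lie, lie_smul, smul_smul, mul_comm a', mul_comm b'] using
    h.lie_mem hxh hyh

lemma lowerCentralSeries_le_scaledDiagonalMod
    (htop : h.scaledDiagonalMod a b (lowerCentralSeries R L L 1).toSubmodule = ⊤) (m : ℕ) :
    (lowerCentralSeries R L L m).toSubmodule ≤
      h.scaledDiagonalMod (a ^ (m + 1)) (b ^ (m + 1))
        (lowerCentralSeries R L L (m + 1)).toSubmodule := by
  induction m with
  | zero => simp only [zero_add, pow_one, htop, le_top]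
  | succ m ih =>
    rw [LieModule.lowerCentralSeries_succ, LieSubmodule.lieIdeal_oper_eq_linear_span',
      Submodule.span_le]
    rintro _ ⟨x, -, n, hn, rfl⟩
    have hx : x ∈ h.scaledDiagonalMod a b (lowerCentralSeries R L L (0 + 1)).toSubmodule :=
      htop ▸ trivial
    simpa [pow_succ'] using lie_mem_scaledDiagonalMod (LieSubmodule.mem_top x) hx hn (ih hn)

end LieSubalgebra

theorem subalgebra_contains_scaled_diagonal_general
    {L : Type*} [LieRing L] [LieAlgebra ℝ L]
    (k : ℕ) (hk : 1 ≤ k)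
    (hnil : LieModule.lowerCentralSeries ℝ L L k = ⊥)
    (r s : ℕ)
    {d₁ : ℕ} (X : Fin d₁ → L)
    (hspan : Submodule.span ℝ (Set.range fun i : Fin d₁ =>
      Submodule.mkQ ((LieModule.lowerCentralSeries ℝ L L 1 : LieIdeal ℝ L) :
        Submodule ℝ L) (X i)) = ⊤)
    (h : LieSubalgebra ℝ (L × L))
    (hY : ∀ i : Fin d₁, ∃ X' X'' : L,
      X' - X i ∈ ((LieModule.lowerCentralSeries ℝ L L 1 : LieIdeal ℝ L) : Submodule ℝ L) ∧
      X'' - X i ∈ ((LieModule.lowerCentralSeries ℝ L L 1 : LieIdeal ℝ L) : Submodule ℝ L) ∧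
      ((r : ℝ) • X', (s : ℝ) • X'') ∈ h) :
    ∀ Z ∈ LieModule.lowerCentralSeries ℝ L L (k - 1),
      (((r : ℝ) ^ k • Z, (s : ℝ) ^ k • Z) : L × L) ∈ h := by
  intro Z hZ
  have htop := LieSubalgebra.scaledDiagonalMod_eq_top hspan hY
  obtain ⟨m, rfl⟩ : ∃ m, k = m + 1 := ⟨k - 1, by omega⟩
  have hZh := LieSubalgebra.lowerCentralSeries_le_scaledDiagonalMod htop m hZ
  rw [hnil, LieSubmodule.bot_toSubmodule] at hZh
  exact LieSubalgebra.mem_scaledDiagonalMod_bot.mp hZh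

/-- If `h ⊆ g ⊕ g` is a Lie subalgebra containing elements `(r X'_i, s X''_i)` with
`X'_i ≡ X''_i ≡ X_i mod g^(2)`, where the classes of `X_1, …, X_{d₁}` form a basis of
`g/g^(2)`, and `g` is `k`-step nilpotent, then `h ⊇ {(r^k Z, s^k Z) : Z ∈ g^(k)}`. -/
theorem subalgebra_contains_scaled_diagonal
    {L : Type*} [LieRing L] [LieAlgebra ℝ L] [FiniteDimensional ℝ L]
    (k : ℕ) (hk : 1 ≤ k)
    (hne : LieModule.lowerCentralSeries ℝ L L (k - 1) ≠ ⊥)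
    (hnil : LieModule.lowerCentralSeries ℝ L L k = ⊥)
    (r s : ℕ) (hr : 0 < r) (hs : 0 < s) (hrs : Nat.Coprime r s)
    {d₁ : ℕ} (X : Fin d₁ → L)
    (hLI : LinearIndependent ℝ fun i : Fin d₁ =>
      Submodule.mkQ ((LieModule.lowerCentralSeries ℝ L L 1 : LieIdeal ℝ L) :
        Submodule ℝ L) (X i))
    (hspan : Submodule.span ℝ (Set.range fun i : Fin d₁ =>
      Submodule.mkQ ((LieModule.lowerCentralSeries ℝ L L 1 : LieIdeal ℝ L) :
        Submodule ℝ L) (X i)) = ⊤)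
    (h : LieSubalgebra ℝ (L × L))
    (hY : ∀ i : Fin d₁, ∃ X' X'' : L,
      X' - X i ∈ ((LieModule.lowerCentralSeries ℝ L L 1 : LieIdeal ℝ L) : Submodule ℝ L) ∧
      X'' - X i ∈ ((LieModule.lowerCentralSeries ℝ L L 1 : LieIdeal ℝ L) : Submodule ℝ L) ∧
      ((r : ℝ) • X', (s : ℝ) • X'') ∈ h) :
    ∀ Z ∈ LieModule.lowerCentralSeries ℝ L L (k - 1),
      (((r : ℝ) ^ k • Z, (s : ℝ) ^ k • Z) : L × L) ∈ h :=
  subalgebra_contains_scaled_diagonal_general k hk hnil r s X hspan h hY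
end
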